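/- arXiv:2103.10261 — 2 statements merged into one kernel-verified Lean document; each statement's English description precedes it below -/
import Mathlib

section
/- Let d ≥ 2 be a real number and let Φ be a Schwartz function on ℝ. Then there exists a constant C > 0 such that for all x, c ∈ ℝ with |x| ≥ 1: ∫_ℝ max(|v|, |x|)^{−d} |Φ(c − v)| dv ≤ C · max(|c|, |x|)^{−d}. (Lemma 9.3(iii) of the paper, archimedean case F = ℝ.) -/
open MeasureTheory

noncomputable section

/-! Let `M = max |c| |x|` and `a = max |v| |x|`; since `M ≤ |c - v| + a`, either `M ≤ 2a` or
`M ≤ 2|c - v|`. In the first case the weight is at most `2^d M^{-d}` and what remains is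
`∫ |Φ(c - v)| dv = ‖Φ‖₁`. In the second, the Schwartz decay of `Φ` gives `|Φ(c - v)| ≲ M^{-d}`,
while `|x| ≥ 1` makes the weight `≲ (1 + |v|)^{-d}`, which is integrable because `d > 1`. -/

theorem Real.rpow_neg_le_two_rpow_mul {a M d : ℝ} (hM : 0 < M) (hMa : M ≤ 2 * a) (hd : 0 ≤ d) :
    a ^ (-d) ≤ 2 ^ d * M ^ (-d) := by
  calc a ^ (-d) ≤ (M / 2) ^ (-d) :=
        Real.rpow_le_rpow_of_nonpos (by positivity) (by linarith) (by linarith)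
    _ = 2 ^ d * M ^ (-d) := by
      rw [Real.div_rpow hM.le zero_le_two, Real.rpow_neg zero_le_two, div_inv_eq_mul, mul_comm]

theorem SchwartzMap.exists_norm_le_mul_one_add_norm_rpow_neg {E F : Type*}
    [NormedAddCommGroup E] [NormedSpace ℝ E] [NormedAddCommGroup F] [NormedSpace ℝ F]
    (f : SchwartzMap E F) (d : ℝ) :
    ∃ K, 0 ≤ K ∧ ∀ y, ‖f y‖ ≤ K * (1 + ‖y‖) ^ (-d) := by
  set k := ⌈d⌉₊
  refine ⟨2 ^ k * (Finset.Iic (k, 0)).sup (fun m => SchwartzMap.seminorm ℝ m.1 m.2) f,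
    by positivity, fun y => ?_⟩
  have hdecay := one_add_le_sup_seminorm_apply (𝕜 := ℝ) (m := (k, 0)) le_rfl le_rfl f y
  rw [norm_iteratedFDeriv_zero] at hdecay
  have hdk : (1 + ‖y‖) ^ d ≤ (1 + ‖y‖) ^ k := by
    rw [← Real.rpow_natCast]
    exact Real.rpow_le_rpow_of_exponent_le (by simp) (Nat.le_ceil d)
  rw [Real.rpow_neg (by positivity), ← div_eq_mul_inv, le_div_iff₀ (by positivity)]
  calc ‖f y‖ * (1 + ‖y‖) ^ d ≤ (1 + ‖y‖) ^ k * ‖f y‖ := by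
        rw [mul_comm]; gcongr
    _ ≤ _ := hdecay

theorem max_abs_rpow_neg_mul_le {E : Type*} [SeminormedAddCommGroup E] {f : ℝ → E} {d K : ℝ}
    (hd : 0 ≤ d) (hK : 0 ≤ K) (hf : ∀ y, ‖f y‖ ≤ K * (1 + |y|) ^ (-d))
    {x : ℝ} (hx : 1 ≤ |x|) (c v : ℝ) :
    max |v| |x| ^ (-d) * ‖f (c - v)‖ ≤
      2 ^ d * max |c| |x| ^ (-d) * (‖f (c - v)‖ + 2 ^ d * K * (1 + |v|) ^ (-d)) := by
  set M := max |c| |x|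
  set a := max |v| |x|
  have hM : 0 < M := by positivity
  have hva : |v| ≤ a := le_max_left _ _
  have hxa : |x| ≤ a := le_max_right _ _
  rcases le_or_gt M (2 * a) with hMa | haM
  · have : 0 ≤ 2 ^ d * K * (1 + |v|) ^ (-d) := by positivity
    calc a ^ (-d) * ‖f (c - v)‖ ≤ 2 ^ d * M ^ (-d) * ‖f (c - v)‖ := by
          gcongr; exact Real.rpow_neg_le_two_rpow_mul hM hMa hd
      _ ≤ _ := by gcongr; linarith
  · have hMcv : M ≤ 2 * (1 + |c - v|) := by
      have : M ≤ |c - v| + a :=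
        max_le (by linarith [abs_sub_abs_le_abs_sub c v]) (by linarith [abs_nonneg (c - v)])
      linarith [abs_nonneg (c - v)]
    have hfcv : ‖f (c - v)‖ ≤ K * (2 ^ d * M ^ (-d)) :=
      (hf _).trans (by gcongr; exact Real.rpow_neg_le_two_rpow_mul hM hMcv hd)
    have hweight : a ^ (-d) ≤ 2 ^ d * (1 + |v|) ^ (-d) :=
      Real.rpow_neg_le_two_rpow_mul (by positivity) (by linarith) hd
    calc a ^ (-d) * ‖f (c - v)‖ ≤ (2 ^ d * (1 + |v|) ^ (-d)) * (K * (2 ^ d * M ^ (-d))) := by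
          gcongr
      _ = 2 ^ d * M ^ (-d) * (2 ^ d * K * (1 + |v|) ^ (-d)) := by ring
      _ ≤ _ := by gcongr; exact le_add_of_nonneg_left (norm_nonneg _)

/-- Lemma 9.3(iii) (archimedean case `F = ℝ`). -/
theorem stmt7
    (d : ℝ) (hd : 2 ≤ d) (Φ : SchwartzMap ℝ ℂ) :
    ∃ C : ℝ, 0 < C ∧
      ∀ x c : ℝ, 1 ≤ |x| →
        ∫⁻ v : ℝ, ENNReal.ofReal (max |v| |x| ^ (-d) * ‖Φ (c - v)‖)
          ≤ ENNReal.ofReal (C * max |c| |x| ^ (-d)) := by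
  obtain ⟨K, hK0, hK⟩ := Φ.exists_norm_le_mul_one_add_norm_rpow_neg d
  have hweight : Integrable fun v : ℝ => (1 + |v|) ^ (-d) :=
    integrable_one_add_norm (E := ℝ) (by simp; linarith)
  set C₀ := 2 ^ d * ((∫ v, ‖Φ v‖) + 2 ^ d * K * ∫ v : ℝ, (1 + |v|) ^ (-d))
  refine ⟨C₀ + 1, by positivity, fun x c hx => ?_⟩
  set M := max |c| |x|
  have hΦc : Integrable fun v => ‖Φ (c - v)‖ := (Φ.integrable.comp_sub_left c).norm
  set g : ℝ → ℝ := fun v => 2 ^ d * M ^ (-d) * (‖Φ (c - v)‖ + 2 ^ d * K * (1 + |v|) ^ (-d))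
  have hg : Integrable g := (hΦc.add (hweight.const_mul _)).const_mul _
  have hg_integral : ∫ v, g v = C₀ * M ^ (-d) := by
    rw [integral_const_mul, integral_add hΦc (hweight.const_mul _), integral_const_mul,
      integral_sub_left_eq_self (fun v => ‖Φ v‖)]
    ring
  calc ∫⁻ v, ENNReal.ofReal (max |v| |x| ^ (-d) * ‖Φ (c - v)‖)
      ≤ ∫⁻ v, ENNReal.ofReal (g v) := lintegral_mono fun v =>
        ENNReal.ofReal_le_ofReal (max_abs_rpow_neg_mul_le (by linarith) hK0 hK hx c v)
    _ = ENNReal.ofReal (C₀ * M ^ (-d)) := by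
        rw [← hg_integral,
          ofReal_integral_eq_lintegral_ofReal hg (.of_forall fun v => by positivity)]
    _ ≤ ENNReal.ofReal ((C₀ + 1) * M ^ (-d)) := ENNReal.ofReal_le_ofReal (by gcongr; linarith)
end
end

section
/- Let d₁, d₂, d₃ be even integers with dᵢ ≥ 4, let ε ∈ (0, 1/2), and let M₁ be a Schwartz function on ℝ⁴. Then there exist a nonnegative Schwartz function J on ℝ and a constant C > 0 (depending on M₁, ε and the dᵢ) such that for every c ∈ ℝ∖{0}: ∫_{(ℝ^×)³} | M₁( c/[a], a₁c/[a], a₂, a₃ ) | · |[a]/c|^{−d₁/2} · {a}^{d/2−1} d^×a ≤ C · J(c) · |c|^{min(d₁,d₂,d₃)/2 − 1 − ε}. (Lemma 9.6 of the paper, archimedean case F = ℝ.) -/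
/-!
Put `s = |c| / |a₁ a₂ a₃|`. The four arguments of `M₁` have absolute values `s`, `s |a₁|`, `|a₂|`,
`|a₃|`, and `s |a₁| |a₂| |a₃| = |c|`. Rapid decay of `M₁` in each of them absorbs every power of
`s` and `|aᵢ|`, so that after splitting off `|c| ^ (m/2 - 1 - ε)` (with `m = min dᵢ`) and
`(1 + |c|)⁻ⁿ` the integrand is bounded by `∏ min (|aᵢ| ^ ε) |aᵢ|⁻¹`, which is integrable for
`d^×a`. This holds for every `n` with some constant `Cₙ`, and all these bounds are dominated at once
by the nonnegative Schwartz function `J x = ∑ₖ bₖ φ (x / 2ᵏ)`, where `φ` is a bump equal to `1` on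
`[-2, 2]` and `bₖ = min_{n ≤ k} Cₙ 2^(-kn)`: since `bₖ ≤ C_{p+1} 2^(-k(p+1))` for `k > p`, every
series `∑ₖ bₖ 2^(kp)` converges, and this controls all Schwartz seminorms of `J`.
-/

open MeasureTheory

noncomputable section

/-- The multiplicative Haar measure `d^×a = da/|a|` on `ℝ^× = ℝ ∖ {0}`. -/
def mulHaar : Measure ℝ := volume.withDensity fun a => ENNReal.ofReal |a|⁻¹

/-- The product measure `d^×a₁ d^×a₂ d^×a₃` on `(ℝ^×)³`. -/
def mulHaar3 : Measure (ℝ × ℝ × ℝ) := mulHaar.prod (mulHaar.prod mulHaar)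

open Real Set Filter
open scoped ContDiff SchwartzMap

def minRpowInv (ε y : ℝ) : ℝ := min (y ^ ε) y⁻¹

theorem minRpowInv_nonneg (ε : ℝ) {y : ℝ} (hy : 0 ≤ y) : 0 ≤ minRpowInv ε y :=
  le_min (by positivity) (by positivity)

theorem le_minRpowInv {ε t X : ℝ} (hε : 0 ≤ ε) (h : X ≤ t⁻¹)
    (h' : t ≤ 1 → X ≤ t ^ ε) : X ≤ minRpowInv ε t := by
  refine le_min ?_ h
  rcases le_total t 1 with ht₁ | ht₁
  · exact h' ht₁
  · exact h.trans ((inv_le_one_of_one_le₀ ht₁).trans (one_le_rpow ht₁ hε))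

theorem rpow_le_one_add_pow {x γ : ℝ} (hx : 0 ≤ x) (hγ : 0 ≤ γ) {N : ℕ} (hγN : γ ≤ N) :
    x ^ γ ≤ (1 + x) ^ N := by
  rw [← rpow_natCast]
  calc x ^ γ ≤ (1 + x) ^ γ := by gcongr; linarith
    _ ≤ (1 + x) ^ (N : ℝ) := rpow_le_rpow_of_exponent_le (by linarith) hγN

theorem rpow_div_one_add_pow_le_minRpowInv {ε β u : ℝ} (hε : 0 ≤ ε) (hεβ : ε ≤ β) (hu : 0 < u)
    {N : ℕ} (hβN : β + 1 ≤ N) : u ^ β / (1 + u) ^ N ≤ minRpowInv ε u := by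
  have hN : 0 < (1 + u) ^ N := by positivity
  refine le_minRpowInv hε ?_ fun hu₁ => ?_
  · calc u ^ β / (1 + u) ^ N ≤ u ^ β / u ^ (β + 1) :=
          div_le_div_of_nonneg_left (by positivity) (by positivity)
            (rpow_le_one_add_pow hu.le (by linarith) hβN)
      _ = u⁻¹ := by rw [rpow_add_one hu.ne', div_mul_cancel_left₀ (by positivity)]
  · calc u ^ β / (1 + u) ^ N ≤ u ^ β := div_le_self (by positivity) (one_le_pow₀ (by linarith))
      _ ≤ u ^ ε := rpow_le_rpow_of_exponent_ge hu hu₁ hεβ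

theorem rpow_mul_rpow_sub_one_div_le_minRpowInv {ε γ s t : ℝ} (hε : 0 ≤ ε) (hεγ : 1 + ε ≤ γ)
    (hs : 0 < s) (ht : 0 < t) {N : ℕ} (hγN : γ ≤ N) :
    s ^ γ * t ^ (γ - 1) / ((1 + s) ^ N * (1 + s * t) ^ N) ≤ minRpowInv ε t := by
  have hs₁ : 1 ≤ (1 + s) ^ N := one_le_pow₀ (by linarith)
  have hst₁ : 1 ≤ (1 + s * t) ^ N := one_le_pow₀ (le_add_of_nonneg_right (by positivity))
  refine le_minRpowInv hε ?_ fun ht₁ => ?_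
  · calc s ^ γ * t ^ (γ - 1) / ((1 + s) ^ N * (1 + s * t) ^ N)
        ≤ s ^ γ * t ^ (γ - 1) / (1 + s * t) ^ N :=
          div_le_div_of_nonneg_left (by positivity) (by positivity) (le_mul_of_one_le_left
            (by positivity) hs₁)
      _ = (s * t) ^ γ / (1 + s * t) ^ N * t⁻¹ := by
          rw [mul_rpow hs.le ht.le, rpow_sub_one ht.ne']; ring
      _ ≤ 1 * t⁻¹ := by
          gcongr
          exact div_le_one_of_le₀ (rpow_le_one_add_pow (by positivity) (by linarith) hγN)
            (by positivity)
      _ = t⁻¹ := one_mul _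
  · calc s ^ γ * t ^ (γ - 1) / ((1 + s) ^ N * (1 + s * t) ^ N)
        ≤ s ^ γ * t ^ (γ - 1) / (1 + s) ^ N :=
          div_le_div_of_nonneg_left (by positivity) (by positivity) (le_mul_of_one_le_right
            (by positivity) hst₁)
      _ = s ^ γ / (1 + s) ^ N * t ^ (γ - 1) := by ring
      _ ≤ 1 * t ^ (γ - 1) := by
          gcongr
          exact div_le_one_of_le₀ (rpow_le_one_add_pow hs.le (by linarith) hγN) (by positivity)
      _ ≤ t ^ ε := by
          rw [one_mul]; exact rpow_le_rpow_of_exponent_ge ht ht₁ (by linarith)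

theorem one_add_mul_mul_mul_le {s t u v : ℝ} (hs : 0 ≤ s) (ht : 0 ≤ t) (hu : 0 ≤ u)
    (hv : 0 ≤ v) : 1 + s * t * u * v ≤ (1 + s) * (1 + s * t) * (1 + u) * (1 + v) := by
  have := mul_nonneg hs ht
  have := mul_nonneg this hu
  nlinarith [mul_nonneg this hv, mul_nonneg hu hv, mul_nonneg (mul_nonneg hs ht) hv]

theorem rpow_mul_div_one_add_mul_pow_le {d₁ d₂ d₃ m ε s t u v : ℝ} (hm : 0 ≤ m) (hm₁ : m ≤ d₁)
    (hm₂ : m ≤ d₂) (hm₃ : m ≤ d₃) (hε : 0 ≤ ε) (hs : 0 < s) (ht : 0 < t) (hu : 0 < u)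
    (hv : 0 < v) {n N : ℕ} (hN : d₁ + d₂ + d₃ + ε + 1 ≤ N) :
    s ^ (d₁ / 2) * (t ^ (d₁ / 2 - 1) * u ^ (d₂ / 2 - 1) * v ^ (d₃ / 2 - 1)) /
        ((1 + s) * (1 + s * t) * (1 + u) * (1 + v)) ^ (n + N)
      ≤ ((1 + s * t * u * v) ^ n)⁻¹ * (s * t * u * v) ^ (m / 2 - 1 - ε) *
        (minRpowInv ε t * minRpowInv ε u * minRpowInv ε v) := by
  obtain ⟨α, hα⟩ : ∃ α, α = m / 2 - 1 - ε := ⟨_, rfl⟩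
  rw [← hα]
  have hs' : s ^ (d₁ / 2) = s ^ α * s ^ (d₁ / 2 - α) := by rw [← rpow_add hs]; ring_nf
  have ht' : t ^ (d₁ / 2 - 1) = t ^ α * t ^ (d₁ / 2 - α - 1) := by rw [← rpow_add ht]; ring_nf
  have hu' : u ^ (d₂ / 2 - 1) = u ^ α * u ^ (d₂ / 2 - 1 - α) := by rw [← rpow_add hu]; ring_nf
  have hv' : v ^ (d₃ / 2 - 1) = v ^ α * v ^ (d₃ / 2 - 1 - α) := by rw [← rpow_add hv]; ring_nf
  have hP : (1 + s * t * u * v) ^ n ≤ ((1 + s) * (1 + s * t) * (1 + u) * (1 + v)) ^ n :=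
    pow_le_pow_left₀ (by positivity) (one_add_mul_mul_mul_le hs.le ht.le hu.le hv.le) n
  calc s ^ (d₁ / 2) * (t ^ (d₁ / 2 - 1) * u ^ (d₂ / 2 - 1) * v ^ (d₃ / 2 - 1)) /
        ((1 + s) * (1 + s * t) * (1 + u) * (1 + v)) ^ (n + N)
      = (((1 + s) * (1 + s * t) * (1 + u) * (1 + v)) ^ n)⁻¹ * (s * t * u * v) ^ α *
        (s ^ (d₁ / 2 - α) * t ^ (d₁ / 2 - α - 1) / ((1 + s) ^ N * (1 + s * t) ^ N) *
          (u ^ (d₂ / 2 - 1 - α) / (1 + u) ^ N) * (v ^ (d₃ / 2 - 1 - α) / (1 + v) ^ N)) := by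
        rw [hs', ht', hu', hv', mul_rpow (by positivity) hv.le, mul_rpow (by positivity) hu.le,
          mul_rpow hs.le ht.le, pow_add]
        simp only [mul_pow]
        field_simp
    _ ≤ ((1 + s * t * u * v) ^ n)⁻¹ * (s * t * u * v) ^ α *
        (minRpowInv ε t * minRpowInv ε u * minRpowInv ε v) := by
        have ht₀ := minRpowInv_nonneg ε ht.le
        have hu₀ := minRpowInv_nonneg ε hu.le
        have hv₀ := minRpowInv_nonneg ε hv.le
        have hst := rpow_mul_rpow_sub_one_div_le_minRpowInv (γ := d₁ / 2 - α) (N := N) hε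
          (by linarith) hs ht (by linarith)
        have hu'' := rpow_div_one_add_pow_le_minRpowInv (β := d₂ / 2 - 1 - α) (N := N) hε
          (by linarith) hu (by linarith)
        have hv'' := rpow_div_one_add_pow_le_minRpowInv (β := d₃ / 2 - 1 - α) (N := N) hε
          (by linarith) hv (by linarith)
        gcongr

theorem measurable_minRpowInv (ε : ℝ) : Measurable (minRpowInv ε) :=
  (measurable_id.pow_const ε).min measurable_inv

theorem integrableOn_inv_mul_minRpowInv {ε : ℝ} (hε : 0 < ε) :
    IntegrableOn (fun y => y⁻¹ * minRpowInv ε y) (Ioi 0) := by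
  have hmeas : AEStronglyMeasurable (fun y : ℝ => y⁻¹ * minRpowInv ε y) volume :=
    (measurable_inv.mul (measurable_minRpowInv ε)).aestronglyMeasurable
  rw [← Ioc_union_Ioi_eq_Ioi zero_le_one]
  refine IntegrableOn.union ?_ ?_
  · have hint : IntegrableOn (fun y : ℝ => y ^ (ε - 1)) (Ioc 0 1) :=
      (intervalIntegral.intervalIntegrable_rpow' (by linarith)).1
    refine hint.mono' hmeas.restrict (ae_restrict_of_forall_mem measurableSet_Ioc fun y hy => ?_)
    have hy₀ : 0 < y := hy.1
    rw [norm_of_nonneg (mul_nonneg (inv_nonneg.2 hy₀.le) (minRpowInv_nonneg ε hy₀.le)),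
      rpow_sub_one hy₀.ne', div_eq_inv_mul]
    exact mul_le_mul_of_nonneg_left (min_le_left _ _) (inv_nonneg.2 hy₀.le)
  · have hint : IntegrableOn (fun y : ℝ => y ^ (-2 : ℝ)) (Ioi 1) :=
      integrableOn_Ioi_rpow_of_lt (by norm_num) one_pos
    refine hint.mono' hmeas.restrict (ae_restrict_of_forall_mem measurableSet_Ioi fun y hy => ?_)
    have hy₀ : 0 < y := one_pos.trans hy
    rw [norm_of_nonneg (mul_nonneg (inv_nonneg.2 hy₀.le) (minRpowInv_nonneg ε hy₀.le)),
      rpow_neg hy₀.le, rpow_two, sq, mul_inv]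
    exact mul_le_mul_of_nonneg_left (min_le_right _ _) (inv_nonneg.2 hy₀.le)

theorem lintegral_minRpowInv_abs_lt_top {ε : ℝ} (hε : 0 < ε) :
    ∫⁻ x, ENNReal.ofReal (minRpowInv ε |x|) ∂mulHaar < ⊤ := by
  have hint : Integrable fun x : ℝ => ‖x‖⁻¹ * minRpowInv ε ‖x‖ :=
    (integrable_fun_norm_addHaar volume (f := fun y => y⁻¹ * minRpowInv ε y)).2
      (by simpa using integrableOn_inv_mul_minRpowInv hε)
  rw [mulHaar, lintegral_withDensity_eq_lintegral_mul₀ (by fun_prop)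
    (g := fun x => ENNReal.ofReal (minRpowInv ε |x|))
    ((measurable_minRpowInv ε).comp measurable_abs).ennreal_ofReal.aemeasurable]
  refine (lintegral_congr fun x => ?_).trans_lt hint.lintegral_lt_top
  rw [Pi.mul_apply, Real.norm_eq_abs, ENNReal.ofReal_mul (by positivity)]

instance : SFinite mulHaar := inferInstanceAs (SFinite (volume.withDensity _))

theorem ae_mulHaar_ne_zero : ∀ᵐ x ∂mulHaar, x ≠ 0 :=
  (withDensity_absolutelyContinuous _ _).ae_le (Measure.ae_ne volume 0)

theorem ae_mulHaar3_ne_zero : ∀ᵐ a ∂mulHaar3, a.1 ≠ 0 ∧ a.2.1 ≠ 0 ∧ a.2.2 ≠ 0 := by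
  have h₂ : ∀ᵐ a ∂mulHaar3, a.2 ∈ {b : ℝ × ℝ | b.1 ≠ 0 ∧ b.2 ≠ 0} :=
    Measure.quasiMeasurePreserving_snd.ae <|
      (Measure.quasiMeasurePreserving_fst.ae ae_mulHaar_ne_zero).and
        (Measure.quasiMeasurePreserving_snd.ae ae_mulHaar_ne_zero)
  filter_upwards [Measure.quasiMeasurePreserving_fst.ae ae_mulHaar_ne_zero, h₂] with a h₁ h₂
  exact ⟨h₁, h₂⟩

theorem lintegral_mulHaar3_mul {f g h : ℝ → ENNReal} (hf : Measurable f) (hg : Measurable g)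
    (hh : Measurable h) :
    ∫⁻ a, f a.1 * (g a.2.1 * h a.2.2) ∂mulHaar3 =
      (∫⁻ x, f x ∂mulHaar) * ((∫⁻ x, g x ∂mulHaar) * ∫⁻ x, h x ∂mulHaar) := by
  rw [mulHaar3, lintegral_prod_mul (g := fun b : ℝ × ℝ => g b.1 * h b.2) hf.aemeasurable
    ((hg.comp measurable_fst).mul (hh.comp measurable_snd)).aemeasurable,
    lintegral_prod_mul hg.aemeasurable hh.aemeasurable]

theorem exists_summable_forall_div_pow_le (C : ℕ → ℝ) (hC : ∀ n, 0 ≤ C n) :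
    ∃ b : ℕ → ℝ, (∀ k, 0 ≤ b k) ∧ (∀ p : ℕ, Summable fun k => b k * 2 ^ (k * p)) ∧
      ∀ k, ∃ n, C n / 2 ^ (k * n) ≤ b k := by
  let b k := (Finset.range (k + 1)).inf' Finset.nonempty_range_add_one fun n => C n / 2 ^ (k * n)
  have hb_le {n k : ℕ} (hnk : n ≤ k) : b k ≤ C n / 2 ^ (k * n) :=
    Finset.inf'_le _ (Finset.mem_range_succ_iff.mpr hnk)
  have hb0 (k : ℕ) : 0 ≤ b k := (Finset.le_inf'_iff _ _).mpr fun n _ => by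
    have := hC n; positivity
  refine ⟨b, hb0, fun p => ?_, fun k => ?_⟩
  · refine Summable.of_norm_bounded_eventually_nat
      ((summable_geometric_two).mul_left (C (p + 1))) ?_
    filter_upwards [eventually_ge_atTop (p + 1)] with k hk
    rw [Real.norm_of_nonneg (mul_nonneg (hb0 k) (by positivity))]
    calc b k * 2 ^ (k * p) ≤ C (p + 1) / 2 ^ (k * (p + 1)) * 2 ^ (k * p) := by
          gcongr; exact hb_le hk
      _ = C (p + 1) * (1 / 2) ^ k := by
          rw [mul_add, mul_one, pow_add, one_div, inv_pow]; field_simp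
  · obtain ⟨n, -, hn⟩ := Finset.exists_mem_eq_inf' Finset.nonempty_range_add_one
      fun n => C n / 2 ^ (k * n)
    exact ⟨n, hn.ge⟩

namespace SchwartzMap

variable {E F : Type*} [NormedAddCommGroup E] [NormedSpace ℝ E]
  [NormedAddCommGroup F] [NormedSpace ℝ F]

theorem exists_one_add_norm_pow_mul_le (f : 𝓢(E, F)) (k : ℕ) :
    ∃ B, ∀ x, (1 + ‖x‖) ^ k * ‖f x‖ ≤ B :=
  ⟨_, fun x => by
    simpa using one_add_le_sup_seminorm_apply (𝕜 := ℝ) (m := (k, 0)) le_rfl le_rfl f x⟩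

theorem exists_norm_mul_prod_one_add_abs_pow_le (f : 𝓢(ℝ × ℝ × ℝ × ℝ, F)) (N : ℕ) :
    ∃ B, 0 ≤ B ∧ ∀ x, ‖f x‖ *
      ((1 + |x.1|) * (1 + |x.2.1|) * (1 + |x.2.2.1|) * (1 + |x.2.2.2|)) ^ N ≤ B := by
  obtain ⟨B, hB⟩ := f.exists_one_add_norm_pow_mul_le (4 * N)
  have hbound (x : ℝ × ℝ × ℝ × ℝ) : ‖f x‖ *
      ((1 + |x.1|) * (1 + |x.2.1|) * (1 + |x.2.2.1|) * (1 + |x.2.2.2|)) ^ N ≤ B := by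
    have h₁ : |x.1| ≤ ‖x‖ := norm_fst_le x
    have h₂ : |x.2.1| ≤ ‖x‖ := (norm_fst_le x.2).trans (norm_snd_le x)
    have h₃ : |x.2.2.1| ≤ ‖x‖ :=
      ((norm_fst_le x.2.2).trans (norm_snd_le x.2)).trans (norm_snd_le x)
    have h₄ : |x.2.2.2| ≤ ‖x‖ :=
      ((norm_snd_le x.2.2).trans (norm_snd_le x.2)).trans (norm_snd_le x)
    calc ‖f x‖ * ((1 + |x.1|) * (1 + |x.2.1|) * (1 + |x.2.2.1|) * (1 + |x.2.2.2|)) ^ N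
        ≤ ‖f x‖ * ((1 + ‖x‖) * (1 + ‖x‖) * (1 + ‖x‖) * (1 + ‖x‖)) ^ N := by gcongr
      _ = (1 + ‖x‖) ^ (4 * N) * ‖f x‖ := by rw [pow_mul]; ring
      _ ≤ B := hB x
  exact ⟨B, (by positivity : (0 : ℝ) ≤ ‖f 0‖ * _).trans (hbound 0), hbound⟩

theorem exists_eq_tsum [CompleteSpace F] {f : ℕ → E → F} (hf : ∀ k, ContDiff ℝ ∞ (f k))
    (w : ℕ → ℕ → ℕ → ℝ) (hw : ∀ p j, Summable (w p j))
    (hfw : ∀ p j k x, ‖x‖ ^ p * ‖iteratedFDeriv ℝ j (f k) x‖ ≤ w p j k) :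
    ∃ J : 𝓢(E, F), ∀ x, J x = ∑' k, f k x := by
  have hf₀ : ∀ (j : ℕ) k x, (j : ℕ∞) ≤ ⊤ → ‖iteratedFDeriv ℝ j (f k) x‖ ≤ w 0 j k :=
    fun j k x _ => by simpa using hfw 0 j k x
  refine ⟨⟨fun x => ∑' k, f k x, contDiff_tsum hf (fun j _ => hw 0 j) hf₀, fun p j => ?_⟩,
    fun _ => rfl⟩
  refine ⟨∑' k, w p j k, fun x => ?_⟩
  have hsum : Summable fun k => ‖iteratedFDeriv ℝ j (f k) x‖ :=
    (hw 0 j).of_nonneg_of_le (fun _ => norm_nonneg _) fun k => hf₀ j k x le_top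
  rw [iteratedFDeriv_tsum_apply hf (fun j _ => hw 0 j) hf₀ le_top]
  calc ‖x‖ ^ p * ‖∑' k, iteratedFDeriv ℝ j (f k) x‖
      ≤ ‖x‖ ^ p * ∑' k, ‖iteratedFDeriv ℝ j (f k) x‖ := by
        gcongr; exact norm_tsum_le_tsum_norm hsum
    _ = ∑' k, ‖x‖ ^ p * ‖iteratedFDeriv ℝ j (f k) x‖ := (tsum_mul_left).symm
    _ ≤ ∑' k, w p j k :=
        (hsum.mul_left _).tsum_le_tsum (hfw p j · x) (hw p j)

theorem pow_mul_norm_iteratedDeriv_comp_mul_le (f : 𝓢(ℝ, F)) {r : ℝ} (hr₀ : 0 < r)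
    (hr₁ : r ≤ 1) (p j : ℕ) (x : ℝ) :
    |x| ^ p * ‖iteratedDeriv j (fun y => f (r * y)) x‖ ≤
      (r ^ p)⁻¹ * SchwartzMap.seminorm ℝ p j f := by
  rw [iteratedDeriv_comp_const_smul (f.smooth j) r, norm_smul, norm_pow, norm_of_nonneg hr₀.le]
  have hx : |x| ^ p = (r ^ p)⁻¹ * |r * x| ^ p := by
    rw [abs_mul, abs_of_pos hr₀, mul_pow, inv_mul_cancel_left₀ (pow_pos hr₀ p).ne']
  calc |x| ^ p * (r ^ j * ‖iteratedDeriv j f (r * x)‖)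
      = (r ^ p)⁻¹ * r ^ j * (|r * x| ^ p * ‖iteratedDeriv j f (r * x)‖) := by rw [hx]; ring
    _ ≤ (r ^ p)⁻¹ * 1 * SchwartzMap.seminorm ℝ p j f := by
        gcongr
        · exact pow_le_one₀ hr₀.le hr₁
        · exact le_seminorm' ℝ p j f (r * x)
    _ = _ := by ring

theorem exists_eq_tsum_smul_comp_dyadic [CompleteSpace F] (φ : 𝓢(ℝ, F)) {b : ℕ → ℝ}
    (hb : ∀ p : ℕ, Summable fun k => |b k| * 2 ^ (k * p)) :
    ∃ J : 𝓢(ℝ, F), ∀ x, J x = ∑' k, b k • φ ((2 ^ k)⁻¹ * x) := by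
  refine exists_eq_tsum
    (fun k => (φ.smooth ⊤).comp (contDiff_const.mul contDiff_id) |>.const_smul _)
    (fun p j k => |b k| * 2 ^ (k * p) * SchwartzMap.seminorm ℝ p j φ)
    (fun p j => (hb p).mul_right _) fun p j k x => ?_
  have h2k : (0 : ℝ) < (2 ^ k)⁻¹ := by positivity
  rw [norm_iteratedFDeriv_eq_norm_iteratedDeriv, Real.norm_eq_abs,
    iteratedDeriv_fun_const_smul_field, norm_smul, Real.norm_eq_abs, mul_left_comm]
  calc |b k| * (|x| ^ p * ‖iteratedDeriv j (fun y => φ ((2 ^ k)⁻¹ * y)) x‖)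
      ≤ |b k| * ((((2 : ℝ) ^ k)⁻¹ ^ p)⁻¹ * SchwartzMap.seminorm ℝ p j φ) := by
        refine mul_le_mul_of_nonneg_left ?_ (abs_nonneg _)
        exact pow_mul_norm_iteratedDeriv_comp_mul_le φ h2k
          (inv_le_one_of_one_le₀ (one_le_pow₀ one_le_two)) p j x
    _ = |b k| * 2 ^ (k * p) * SchwartzMap.seminorm ℝ p j φ := by
        rw [inv_pow, inv_inv, pow_mul]; ring

theorem exists_nonneg_majorant (C : ℕ → ℝ) (hC : ∀ n, 0 ≤ C n) :
    ∃ J : 𝓢(ℝ, ℝ), (∀ x, 0 ≤ J x) ∧ ∀ x, ∃ n, C n * ((1 + |x|) ^ n)⁻¹ ≤ J x := by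
  let ψ : ContDiffBump (0 : ℝ) := ⟨2, 3, two_pos, by norm_num⟩
  let φ : 𝓢(ℝ, ℝ) := ψ.hasCompactSupport.toSchwartzMap ψ.contDiff
  obtain ⟨b, hb0, hb, hCb⟩ := exists_summable_forall_div_pow_le C hC
  obtain ⟨J, hJ⟩ := exists_eq_tsum_smul_comp_dyadic φ (b := b) fun p => by
    simpa only [abs_of_nonneg (hb0 _)] using hb p
  have hterm (k : ℕ) (x : ℝ) : 0 ≤ b k • φ ((2 ^ k)⁻¹ * x) := mul_nonneg (hb0 k) ψ.nonneg
  have hsum (x : ℝ) : Summable fun k => b k • φ ((2 ^ k)⁻¹ * x) := by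
    refine ((hb 0).mul_right (SchwartzMap.seminorm ℝ 0 0 φ)).of_nonneg_of_le (hterm · x)
      fun k => ?_
    rw [smul_eq_mul, mul_zero, pow_zero, mul_one]
    exact mul_le_mul_of_nonneg_left ((le_abs_self _).trans (norm_le_seminorm ℝ φ _)) (hb0 k)
  refine ⟨J, fun x => hJ x ▸ tsum_nonneg (hterm · x), fun x => ?_⟩
  obtain ⟨k, hk, hk'⟩ := exists_nat_pow_near (le_add_of_nonneg_right (abs_nonneg x)) one_lt_two
  obtain ⟨n, hn⟩ := hCb k
  have hφ : φ ((2 ^ k)⁻¹ * x) = 1 := by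
    refine ψ.one_of_mem_closedBall ?_
    rw [mem_closedBall_zero_iff, norm_mul, norm_inv, norm_pow, Real.norm_two, Real.norm_eq_abs,
      inv_mul_le_iff₀ (by positivity)]
    rw [pow_succ] at hk'
    show |x| ≤ 2 ^ k * 2
    linarith
  refine ⟨n, ?_⟩
  calc C n * ((1 + |x|) ^ n)⁻¹ ≤ C n / 2 ^ (k * n) := by
        rw [div_eq_mul_inv, pow_mul]
        gcongr
        exact hC n
    _ ≤ b k • φ ((2 ^ k)⁻¹ * x) := by rw [hφ, smul_eq_mul, mul_one]; exact hn
    _ ≤ J x := hJ x ▸ (hsum x).le_tsum k fun j _ => hterm j x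

end SchwartzMap

section Integrand

variable {F : Type*} [NormedAddCommGroup F] [NormedSpace ℝ F]

def integrand (M : 𝓢(ℝ × ℝ × ℝ × ℝ, F)) (d₁ d₂ d₃ c : ℝ) (a : ℝ × ℝ × ℝ) : ℝ :=
  ‖M (c / (a.1 * a.2.1 * a.2.2), a.1 * c / (a.1 * a.2.1 * a.2.2), a.2.1, a.2.2)‖ *
    |a.1 * a.2.1 * a.2.2 / c| ^ (-d₁ / 2) *
    (|a.1| ^ (d₁ / 2 - 1) * |a.2.1| ^ (d₂ / 2 - 1) * |a.2.2| ^ (d₃ / 2 - 1))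

variable {M : 𝓢(ℝ × ℝ × ℝ × ℝ, F)} {d₁ d₂ d₃ m ε B : ℝ} {n N : ℕ}

theorem integrand_le (hm : 0 ≤ m) (hm₁ : m ≤ d₁) (hm₂ : m ≤ d₂) (hm₃ : m ≤ d₃) (hε : 0 ≤ ε)
    (hN : d₁ + d₂ + d₃ + ε + 1 ≤ N)
    (hM : ∀ x, ‖M x‖ *
      ((1 + |x.1|) * (1 + |x.2.1|) * (1 + |x.2.2.1|) * (1 + |x.2.2.2|)) ^ (n + N) ≤ B)
    {c : ℝ} (hc : c ≠ 0) {a : ℝ × ℝ × ℝ} (ha : a.1 ≠ 0 ∧ a.2.1 ≠ 0 ∧ a.2.2 ≠ 0) :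
    integrand M d₁ d₂ d₃ c a ≤ B * (((1 + |c|) ^ n)⁻¹ * |c| ^ (m / 2 - 1 - ε)) *
      (minRpowInv ε |a.1| * (minRpowInv ε |a.2.1| * minRpowInv ε |a.2.2|)) := by
  obtain ⟨a₁, a₂, a₃⟩ := a
  obtain ⟨h₁, h₂, h₃⟩ := ha
  dsimp only at h₁ h₂ h₃ ⊢
  have ht := abs_pos.2 h₁
  have hu := abs_pos.2 h₂
  have hv := abs_pos.2 h₃
  set s := |c| / (|a₁| * |a₂| * |a₃|)
  have hs : 0 < s := by positivity
  have hcs : s * |a₁| * |a₂| * |a₃| = |c| := by simp only [s]; field_simp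
  have hx := hM (c / (a₁ * a₂ * a₃), a₁ * c / (a₁ * a₂ * a₃), a₂, a₃)
  have e₁ : |c / (a₁ * a₂ * a₃)| = s := by simp only [abs_div, abs_mul, s]
  have e₂ : |a₁ * c / (a₁ * a₂ * a₃)| = s * |a₁| := by
    simp only [abs_div, abs_mul, s]; field_simp
  have e₃ : |a₁ * a₂ * a₃ / c| ^ (-d₁ / 2) = s ^ (d₁ / 2) := by
    rw [neg_div, rpow_neg (abs_nonneg _), ← inv_rpow (abs_nonneg _), ← abs_inv, inv_div, ← e₁]
  dsimp only at hx
  rw [e₁, e₂, ← le_div_iff₀ (by positivity)] at hx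
  rw [integrand, e₃]
  dsimp only
  calc ‖M (c / (a₁ * a₂ * a₃), a₁ * c / (a₁ * a₂ * a₃), a₂, a₃)‖ * s ^ (d₁ / 2) *
        (|a₁| ^ (d₁ / 2 - 1) * |a₂| ^ (d₂ / 2 - 1) * |a₃| ^ (d₃ / 2 - 1))
      ≤ B / ((1 + s) * (1 + s * |a₁|) * (1 + |a₂|) * (1 + |a₃|)) ^ (n + N) * s ^ (d₁ / 2) *
        (|a₁| ^ (d₁ / 2 - 1) * |a₂| ^ (d₂ / 2 - 1) * |a₃| ^ (d₃ / 2 - 1)) := by gcongr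
    _ = B * (s ^ (d₁ / 2) * (|a₁| ^ (d₁ / 2 - 1) * |a₂| ^ (d₂ / 2 - 1) * |a₃| ^ (d₃ / 2 - 1)) /
        ((1 + s) * (1 + s * |a₁|) * (1 + |a₂|) * (1 + |a₃|)) ^ (n + N)) := by ring
    _ ≤ B * (((1 + s * |a₁| * |a₂| * |a₃|) ^ n)⁻¹ * (s * |a₁| * |a₂| * |a₃|) ^ (m / 2 - 1 - ε) *
        (minRpowInv ε |a₁| * minRpowInv ε |a₂| * minRpowInv ε |a₃|)) := by
        have hB : 0 ≤ B := (by positivity : (0 : ℝ) ≤ ‖M 0‖ * _).trans (hM 0)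
        gcongr
        exact rpow_mul_div_one_add_mul_pow_le hm hm₁ hm₂ hm₃ hε hs ht hu hv hN
    _ = _ := by rw [hcs]; ring

end Integrand

theorem exists_lintegral_integrand_le {F : Type*} [NormedAddCommGroup F] [NormedSpace ℝ F]
    (M : 𝓢(ℝ × ℝ × ℝ × ℝ, F)) {d₁ d₂ d₃ m ε : ℝ} (hm : 0 ≤ m) (hm₁ : m ≤ d₁) (hm₂ : m ≤ d₂)
    (hm₃ : m ≤ d₃) (hε : 0 < ε) (n : ℕ) :
    ∃ C, 0 ≤ C ∧ ∀ c, c ≠ 0 → ∫⁻ a, ENNReal.ofReal (integrand M d₁ d₂ d₃ c a) ∂mulHaar3 ≤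
      ENNReal.ofReal (C * ((1 + |c|) ^ n)⁻¹ * |c| ^ (m / 2 - 1 - ε)) := by
  let N := ⌈d₁ + d₂ + d₃ + ε + 1⌉₊
  obtain ⟨B, hB, hM⟩ := M.exists_norm_mul_prod_one_add_abs_pow_le (n + N)
  let g x := ENNReal.ofReal (minRpowInv ε |x|)
  have hg : Measurable g := ((measurable_minRpowInv ε).comp measurable_abs).ennreal_ofReal
  let K := ∫⁻ x, g x ∂mulHaar
  have hK : K = ENNReal.ofReal K.toReal :=
    (ENNReal.ofReal_toReal (lintegral_minRpowInv_abs_lt_top hε).ne).symm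
  refine ⟨B * K.toReal ^ 3, by positivity, fun c hc => ?_⟩
  have hC : 0 ≤ B * (((1 + |c|) ^ n)⁻¹ * |c| ^ (m / 2 - 1 - ε)) := by positivity
  -- only a.e.: where some `aᵢ = 0` the integrand is made of junk values (`x / 0 = 0`, `0 ^ 0 = 1`)
  calc ∫⁻ a, ENNReal.ofReal (integrand M d₁ d₂ d₃ c a) ∂mulHaar3
      ≤ ∫⁻ a, ENNReal.ofReal (B * (((1 + |c|) ^ n)⁻¹ * |c| ^ (m / 2 - 1 - ε))) *
          (g a.1 * (g a.2.1 * g a.2.2)) ∂mulHaar3 := by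
        refine lintegral_mono_ae (ae_mulHaar3_ne_zero.mono fun a ha => ?_)
        rw [← ENNReal.ofReal_mul (minRpowInv_nonneg ε (abs_nonneg _)), ← ENNReal.ofReal_mul
          (minRpowInv_nonneg ε (abs_nonneg _)), ← ENNReal.ofReal_mul hC]
        exact ENNReal.ofReal_le_ofReal
          (integrand_le hm hm₁ hm₂ hm₃ hε.le (Nat.le_ceil _) hM hc ha)
    _ = ENNReal.ofReal (B * (((1 + |c|) ^ n)⁻¹ * |c| ^ (m / 2 - 1 - ε))) * (K * (K * K)) := by
        rw [lintegral_const_mul' _ _ ENNReal.ofReal_ne_top, lintegral_mulHaar3_mul hg hg hg]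
    _ = ENNReal.ofReal (B * K.toReal ^ 3 * ((1 + |c|) ^ n)⁻¹ * |c| ^ (m / 2 - 1 - ε)) := by
        rw [hK, ← ENNReal.ofReal_mul (by positivity), ← ENNReal.ofReal_mul (by positivity),
          ← ENNReal.ofReal_mul hC, ENNReal.toReal_ofReal (by positivity)]
        ring_nf

theorem stmt10_general
    (d₁ d₂ d₃ : ℕ)
    (ε : ℝ) (hε0 : 0 < ε)
    (M₁ : SchwartzMap (ℝ × ℝ × ℝ × ℝ) ℂ) :
    ∃ J : SchwartzMap ℝ ℝ, (∀ x, 0 ≤ J x) ∧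
      ∃ C : ℝ, 0 < C ∧
        ∀ c : ℝ, c ≠ 0 →
          (∫⁻ a : ℝ × ℝ × ℝ, ENNReal.ofReal
              (‖M₁ (c / (a.1 * a.2.1 * a.2.2), a.1 * c / (a.1 * a.2.1 * a.2.2),
                  a.2.1, a.2.2)‖ *
                |a.1 * a.2.1 * a.2.2 / c| ^ (-(d₁ : ℝ) / 2) *
                (|a.1| ^ ((d₁ : ℝ) / 2 - 1) * |a.2.1| ^ ((d₂ : ℝ) / 2 - 1) *
                  |a.2.2| ^ ((d₃ : ℝ) / 2 - 1))) ∂mulHaar3)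
          ≤ ENNReal.ofReal
              (C * J c * |c| ^ ((min d₁ (min d₂ d₃) : ℝ) / 2 - 1 - ε)) := by
  have hm : 0 ≤ min (d₁ : ℝ) (min (d₂ : ℝ) (d₃ : ℝ)) := by positivity
  choose C hC₀ hC using exists_lintegral_integrand_le M₁ hm (min_le_left _ _)
    ((min_le_right _ _).trans (min_le_left _ _)) ((min_le_right _ _).trans (min_le_right _ _)) hε0
  obtain ⟨J, hJ₀, hJ⟩ := SchwartzMap.exists_nonneg_majorant C hC₀
  refine ⟨J, hJ₀, 1, one_pos, fun c hc => ?_⟩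
  obtain ⟨n, hn⟩ := hJ c
  refine (hC n c hc).trans (ENNReal.ofReal_le_ofReal ?_)
  rw [one_mul]
  gcongr

/-- Lemma 9.6 (archimedean case `F = ℝ`). -/
theorem stmt10
    (d₁ d₂ d₃ : ℕ) (hd₁e : Even d₁) (hd₂e : Even d₂) (hd₃e : Even d₃)
    (hd₁ : 4 ≤ d₁) (hd₂ : 4 ≤ d₂) (hd₃ : 4 ≤ d₃)
    (ε : ℝ) (hε0 : 0 < ε) (hε : ε < 1 / 2)
    (M₁ : SchwartzMap (ℝ × ℝ × ℝ × ℝ) ℂ) :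
    ∃ J : SchwartzMap ℝ ℝ, (∀ x, 0 ≤ J x) ∧
      ∃ C : ℝ, 0 < C ∧
        ∀ c : ℝ, c ≠ 0 →
          (∫⁻ a : ℝ × ℝ × ℝ, ENNReal.ofReal
              (‖M₁ (c / (a.1 * a.2.1 * a.2.2), a.1 * c / (a.1 * a.2.1 * a.2.2),
                  a.2.1, a.2.2)‖ *
                |a.1 * a.2.1 * a.2.2 / c| ^ (-(d₁ : ℝ) / 2) *
                (|a.1| ^ ((d₁ : ℝ) / 2 - 1) * |a.2.1| ^ ((d₂ : ℝ) / 2 - 1) *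
                  |a.2.2| ^ ((d₃ : ℝ) / 2 - 1))) ∂mulHaar3)
          ≤ ENNReal.ofReal
              (C * J c * |c| ^ ((min d₁ (min d₂ d₃) : ℝ) / 2 - 1 - ε)) :=
  stmt10_general d₁ d₂ d₃ ε hε0 M₁
end
end
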